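/- Fix β ∈ (0,1), σ_Z ≥ 0 and τ_Q > 0. For α ∈ (0,1) write σ_α = √(α² + (1−α)² + σ_Z²) and c(α) = αβ + (1−α)(1−β). Then the mean admitted type α ↦ (α/σ_α)·H(τ_Q σ_α / c(α)) is strictly increasing on (0,1), and the mean admitted soft skill α ↦ ((1−α)/σ_α)·H(τ_Q σ_α / c(α)) is strictly decreasing on (0,1). -/

import Mathlib

/-!
The hazard rate satisfies `H' = H (H - x)`, and the Mills-ratio bounds `x (1 - Φ x) ≤ φ x` and
`x φ x ≤ (1 + x²) (1 - Φ x)` show that its elasticity `e = x (H - x)` lies in `[0, 1]` for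
`x ≥ 0`. Consequently the derivative of `g/σ · H(τσ/c)` is `H/σ` times the convex
combination, with weights `1 - e` and `e`, of `σ (g/σ)'` and `c (g/c)'`; it is positive as soon as
`g/σ` and `g/c` are increasing. In the admissions model this holds for `g α = α - k`, `k ∈ [0, 1]`;
`k = 0` gives the mean type and `k = 1` minus the mean soft skill.
-/

open MeasureTheory Real Set Filter

/-- Standard normal pdf. -/
noncomputable def phi (x : ℝ) : ℝ := Real.exp (-x ^ 2 / 2) / Real.sqrt (2 * Real.pi)

/-- Standard normal cdf. -/
noncomputable def Phi (x : ℝ) : ℝ := ∫ y in Set.Iic x, phi y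

/-- Standard normal hazard rate. -/
noncomputable def Haz (x : ℝ) : ℝ := phi x / (1 - Phi x)

open Topology

lemma phi_pos (x : ℝ) : 0 < phi x := by
  unfold phi; positivity

lemma hasDerivAt_phi (x : ℝ) : HasDerivAt phi (-x * phi x) x := by
  have h : HasDerivAt (fun x : ℝ => -x ^ 2 / 2) (-x) x := by
    simpa using (((hasDerivAt_pow 2 x).neg).div_const 2).congr_deriv (by ring)
  exact (h.exp.div_const (Real.sqrt (2 * π))).congr_deriv (by unfold phi; ring)

lemma phi_eq_exp_neg_mul_sq : phi = fun x => Real.exp (-(1 / 2) * x ^ 2) / Real.sqrt (2 * π) := by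
  funext x; unfold phi; ring_nf

lemma integrable_phi : Integrable phi := by
  rw [phi_eq_exp_neg_mul_sq]
  exact (integrable_exp_neg_mul_sq (by norm_num)).div_const _

lemma integral_phi : ∫ x, phi x = 1 := by
  simp only [phi_eq_exp_neg_mul_sq, integral_div, integral_gaussian]
  rw [div_eq_one_iff_eq (by positivity)]
  norm_num
  ring

lemma one_sub_Phi_eq_integral_Ioi (x : ℝ) : 1 - Phi x = ∫ t in Ioi x, phi t := by
  have h := intervalIntegral.integral_Iic_add_Ioi (b := x) integrable_phi.integrableOn
    integrable_phi.integrableOn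
  rw [integral_phi] at h
  unfold Phi; linarith

lemma one_sub_Phi_pos (x : ℝ) : 0 < 1 - Phi x := by
  rw [one_sub_Phi_eq_integral_Ioi, setIntegral_pos_iff_support_of_nonneg_ae
    (.of_forall fun t => (phi_pos t).le) integrable_phi.integrableOn]
  simp [Function.support, (phi_pos _).ne', Real.volume_Ioi]

lemma hasDerivAt_Phi (x : ℝ) : HasDerivAt Phi (phi x) x := by
  have h : Phi = fun y => Phi 0 + ∫ t in (0 : ℝ)..y, phi t := by
    funext y
    rw [← intervalIntegral.integral_Iic_sub_Iic integrable_phi.integrableOn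
      integrable_phi.integrableOn]
    unfold Phi; ring
  have hphi : Continuous phi := by unfold phi; fun_prop
  rw [h]
  exact (intervalIntegral.integral_hasDerivAt_right integrable_phi.intervalIntegrable
    hphi.stronglyMeasurable.stronglyMeasurableAtFilter hphi.continuousAt).const_add _

lemma tendsto_phi_atTop : Tendsto phi atTop (𝓝 0) := by
  have h : Tendsto (fun x : ℝ => -x ^ 2 / 2) atTop atBot :=
    (tendsto_neg_atBot_iff.2 (tendsto_pow_atTop two_ne_zero)).atBot_div_const two_pos
  have := (Real.tendsto_exp_atBot.comp h).div_const (Real.sqrt (2 * π))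
  rwa [zero_div] at this

lemma tendsto_mul_phi_atTop : Tendsto (fun x => x * phi x) atTop (𝓝 0) := by
  have h := (tendsto_pow_mul_exp_neg_atTop_nhds_zero 1).div_const (Real.sqrt (2 * π))
  rw [zero_div] at h
  refine squeeze_zero' ?_ ?_ h
  · filter_upwards [eventually_ge_atTop 0] with x hx
    exact mul_nonneg hx (phi_pos x).le
  · filter_upwards [eventually_ge_atTop 2] with x hx
    have hexp : Real.exp (-x ^ 2 / 2) ≤ Real.exp (-x) := Real.exp_le_exp.2 (by nlinarith)
    unfold phi
    rw [pow_one, mul_div_assoc']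
    gcongr

lemma integral_Ioi_mul_phi {x : ℝ} (hx : 0 ≤ x) :
    IntegrableOn (fun t => t * phi t) (Ioi x) ∧ ∫ t in Ioi x, t * phi t = phi x := by
  have hd : ∀ t ∈ Ici x, HasDerivAt (fun t => -phi t) (t * phi t) t := fun t _ =>
    (hasDerivAt_phi t).neg.congr_deriv (by ring)
  have hpos : ∀ t ∈ Ioi x, 0 ≤ t * phi t := fun t ht =>
    mul_nonneg (hx.trans ht.le) (phi_pos t).le
  have htend : Tendsto (fun t => -phi t) atTop (𝓝 0) := by simpa using tendsto_phi_atTop.neg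
  refine ⟨integrableOn_Ioi_deriv_of_nonneg' hd hpos htend, ?_⟩
  simpa using integral_Ioi_of_hasDerivAt_of_nonneg' hd hpos htend

lemma mul_one_sub_Phi_le_phi {x : ℝ} (hx : 0 ≤ x) : x * (1 - Phi x) ≤ phi x := by
  obtain ⟨hint, heq⟩ := integral_Ioi_mul_phi hx
  rw [one_sub_Phi_eq_integral_Ioi, ← integral_const_mul, ← heq]
  refine setIntegral_mono_on (integrable_phi.integrableOn.const_mul x) hint measurableSet_Ioi
    fun t ht => ?_
  exact mul_le_mul_of_nonneg_right ht.le (phi_pos t).le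

lemma tendsto_one_sub_Phi_atTop : Tendsto (fun x => 1 - Phi x) atTop (𝓝 0) := by
  refine squeeze_zero' (.of_forall fun x => (one_sub_Phi_pos x).le) ?_ tendsto_phi_atTop
  filter_upwards [eventually_ge_atTop 1] with x hx
  nlinarith [mul_one_sub_Phi_le_phi (zero_le_one.trans hx), one_sub_Phi_pos x]

lemma tendsto_one_add_sq_mul_one_sub_Phi_atTop :
    Tendsto (fun x => (1 + x ^ 2) * (1 - Phi x)) atTop (𝓝 0) := by
  have h : Tendsto (fun x => (1 - Phi x) + x * phi x) atTop (𝓝 0) := by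
    simpa using tendsto_one_sub_Phi_atTop.add tendsto_mul_phi_atTop
  refine squeeze_zero' (.of_forall fun x => by nlinarith [one_sub_Phi_pos x]) ?_ h
  filter_upwards [eventually_ge_atTop 0] with x hx
  nlinarith [mul_one_sub_Phi_le_phi hx]

lemma mul_phi_le_one_add_sq_mul_one_sub_Phi {x : ℝ} (hx : 0 ≤ x) :
    x * phi x ≤ (1 + x ^ 2) * (1 - Phi x) := by
  set r : ℝ → ℝ := fun y => (1 + y ^ 2) * (1 - Phi y) - y * phi y
  have hr' : ∀ y, HasDerivAt r (2 * (y * (1 - Phi y) - phi y)) y := fun y => by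
    have h1 : HasDerivAt (fun y : ℝ => 1 + y ^ 2) (2 * y) y := by
      simpa using (hasDerivAt_pow 2 y).const_add 1
    have h2 : HasDerivAt (fun y => 1 - Phi y) (-phi y) y := by
      simpa using (hasDerivAt_Phi y).const_sub 1
    exact ((h1.mul h2).sub ((hasDerivAt_id' y).mul (hasDerivAt_phi y))).congr_deriv (by ring)
  have hanti : AntitoneOn r (Ici x) := by
    refine antitoneOn_of_hasDerivWithinAt_nonpos (convex_Ici x)
      (fun y _ => (hr' y).continuousAt.continuousWithinAt)
      (fun y _ => (hr' y).hasDerivWithinAt) fun y hy => ?_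
    rw [interior_Ici] at hy
    linarith [mul_one_sub_Phi_le_phi (hx.trans hy.le)]
  have htend : Tendsto r atTop (𝓝 0) := by
    simpa using tendsto_one_add_sq_mul_one_sub_Phi_atTop.sub tendsto_mul_phi_atTop
  have : 0 ≤ r x := le_of_tendsto htend
    (by filter_upwards [eventually_ge_atTop x] with y hy using hanti self_mem_Ici hy hy)
  simp only [r] at this
  linarith

lemma Haz_pos (x : ℝ) : 0 < Haz x := div_pos (phi_pos x) (one_sub_Phi_pos x)

lemma hasDerivAt_Haz (x : ℝ) : HasDerivAt Haz (Haz x * (Haz x - x)) x := by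
  have hden : HasDerivAt (fun y => 1 - Phi y) (-phi x) x := by
    simpa using (hasDerivAt_Phi x).const_sub 1
  have hne := (one_sub_Phi_pos x).ne'
  refine ((hasDerivAt_phi x).div hden hne).congr_deriv ?_
  unfold Haz
  field_simp
  ring

/-- The elasticity `x H'(x) / H(x)` of the hazard rate. -/
noncomputable def hazElasticity (x : ℝ) : ℝ := x * (Haz x - x)

lemma hazElasticity_nonneg {x : ℝ} (hx : 0 ≤ x) : 0 ≤ hazElasticity x := by
  have : x ≤ Haz x := (le_div_iff₀ (one_sub_Phi_pos x)).2 (mul_one_sub_Phi_le_phi hx)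
  exact mul_nonneg hx (sub_nonneg.2 this)

lemma hazElasticity_le_one {x : ℝ} (hx : 0 ≤ x) : hazElasticity x ≤ 1 := by
  have : x * Haz x ≤ 1 + x ^ 2 := by
    rw [Haz, mul_div_assoc', div_le_iff₀ (one_sub_Phi_pos x)]
    exact mul_phi_le_one_add_sq_mul_one_sub_Phi hx
  rw [hazElasticity]
  nlinarith

section

variable {g σ c : ℝ → ℝ} {τ : ℝ}

lemma hasDerivAt_div_mul_Haz {g' σ' c' a : ℝ} (hg : HasDerivAt g g' a)
    (hσ : HasDerivAt σ σ' a) (hc : HasDerivAt c c' a) (hσ0 : σ a ≠ 0) (hc0 : c a ≠ 0) :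
    HasDerivAt (fun x => g x / σ x * Haz (τ * σ x / c x))
      (let u := τ * σ a / c a
       Haz u / σ a * ((1 - hazElasticity u) * (g' - g a * σ' / σ a) +
         hazElasticity u * (g' - g a * c' / c a))) a := by
  have hu := (hσ.const_mul τ).div hc hc0
  refine ((hg.div hσ hσ0).mul ((hasDerivAt_Haz _).comp a hu)).congr_deriv ?_
  simp only [Pi.div_apply, Function.comp_apply, hazElasticity]
  field_simp
  ring

theorem strictMonoOn_div_mul_Haz {s : Set ℝ} (hs : Convex ℝ s) (hτ : 0 < τ)
    (g' σ' c' : ℝ → ℝ) (hg : ∀ a ∈ s, HasDerivAt g (g' a) a)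
    (hσ : ∀ a ∈ s, HasDerivAt σ (σ' a) a) (hc : ∀ a ∈ s, HasDerivAt c (c' a) a)
    (hσ0 : ∀ a ∈ s, 0 < σ a) (hc0 : ∀ a ∈ s, 0 < c a)
    (hgσ : ∀ a ∈ s, g a * σ' a < g' a * σ a) (hgc : ∀ a ∈ s, g a * c' a < g' a * c a) :
    StrictMonoOn (fun x => g x / σ x * Haz (τ * σ x / c x)) s := by
  have hderiv a (ha : a ∈ s) := hasDerivAt_div_mul_Haz (τ := τ) (hg a ha) (hσ a ha) (hc a ha)
    (hσ0 a ha).ne' (hc0 a ha).ne'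
  refine strictMonoOn_of_deriv_pos hs
    (fun a ha => (hderiv a ha).continuousAt.continuousWithinAt) fun a ha => ?_
  have ha := interior_subset ha
  rw [(hderiv a ha).deriv]
  have hu : 0 ≤ τ * σ a / c a := (div_pos (mul_pos hτ (hσ0 a ha)) (hc0 a ha)).le
  have hA : 0 < g' a - g a * σ' a / σ a := by
    rw [sub_pos, div_lt_iff₀ (hσ0 a ha)]; exact hgσ a ha
  have hB : 0 < g' a - g a * c' a / c a := by
    rw [sub_pos, div_lt_iff₀ (hc0 a ha)]; exact hgc a ha
  have hm0 := hazElasticity_nonneg hu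
  have hm1 := hazElasticity_le_one hu
  refine mul_pos (div_pos (Haz_pos _) (hσ0 a ha)) ?_
  rcases hm1.lt_or_eq with hm1 | hm1
  · exact add_pos_of_pos_of_nonneg (mul_pos (sub_pos.2 hm1) hA) (mul_nonneg hm0 hB.le)
  · simp [hm1, hB]

end

lemma hasDerivAt_sqrt_sq_add_one_sub_sq_add (σZ a : ℝ) :
    HasDerivAt (fun α => √(α ^ 2 + (1 - α) ^ 2 + σZ ^ 2))
      ((2 * a - 1) / √(a ^ 2 + (1 - a) ^ 2 + σZ ^ 2)) a := by
  have hq : HasDerivAt (fun α : ℝ => α ^ 2 + (1 - α) ^ 2 + σZ ^ 2) (2 * (2 * a - 1)) a := by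
    have h := (((hasDerivAt_pow 2 a).add (((hasDerivAt_id' a).const_sub 1).pow 2)).add_const
      (σZ ^ 2))
    exact h.congr_deriv (by ring)
  refine (hq.sqrt (by nlinarith [sq_nonneg (2 * a - 1), sq_nonneg σZ])).congr_deriv ?_
  ring

lemma strictMonoOn_sub_div_mul_Haz {β σZ τQ k : ℝ} (hβ : β ∈ Ioo 0 1) (hτ : 0 < τQ)
    {σα c : ℝ → ℝ} (hσα : ∀ α, σα α = √(α ^ 2 + (1 - α) ^ 2 + σZ ^ 2))
    (hc : ∀ α, c α = α * β + (1 - α) * (1 - β)) (hk0 : 0 ≤ k) (hk1 : k ≤ 1) :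
    StrictMonoOn (fun α => (α - k) / σα α * Haz (τQ * σα α / c α)) (Ioo 0 1) := by
  obtain ⟨hβ0, hβ1⟩ := hβ
  obtain rfl : σα = _ := funext hσα
  obtain rfl : c = _ := funext hc
  have hq (a : ℝ) : 0 < a ^ 2 + (1 - a) ^ 2 + σZ ^ 2 := by
    nlinarith [sq_nonneg (2 * a - 1), sq_nonneg σZ]
  refine strictMonoOn_div_mul_Haz (convex_Ioo 0 1) hτ (fun _ => 1)
    (fun a => (2 * a - 1) / √(a ^ 2 + (1 - a) ^ 2 + σZ ^ 2)) (fun _ => 2 * β - 1)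
    (fun a _ => (hasDerivAt_id' a).sub_const k)
    (fun a _ => hasDerivAt_sqrt_sq_add_one_sub_sq_add σZ a) (fun a _ => ?_)
    (fun a _ => sqrt_pos.2 (hq a))
    (fun a ⟨ha0, ha1⟩ => by
      nlinarith [mul_pos ha0 hβ0, mul_pos (sub_pos.2 ha1) (sub_pos.2 hβ1)])
    (fun a ⟨ha0, ha1⟩ => ?_) (fun a _ => ?_)
  · exact (((hasDerivAt_id' a).mul_const β).add
      (((hasDerivAt_id' a).const_sub 1).mul_const (1 - β))).congr_deriv (by ring)
  · rw [mul_div_assoc', div_lt_iff₀ (sqrt_pos.2 (hq a)), one_mul, mul_self_sqrt (hq a).le]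
    nlinarith
  · rcases le_total β (1 / 2) with hβ | hβ <;> nlinarith

theorem stmt7_general (β σZ τQ : ℝ) (hβ : β ∈ Set.Ioo (0 : ℝ) 1) (hτ : 0 < τQ)
    (σα c : ℝ → ℝ)
    (hσα : ∀ α, σα α = Real.sqrt (α ^ 2 + (1 - α) ^ 2 + σZ ^ 2))
    (hc : ∀ α, c α = α * β + (1 - α) * (1 - β)) :
    StrictMonoOn (fun α => α / σα α * Haz (τQ * σα α / c α)) (Set.Ioo 0 1) ∧
    StrictAntiOn (fun α => (1 - α) / σα α * Haz (τQ * σα α / c α)) (Set.Ioo 0 1) := by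
  constructor
  · simpa using strictMonoOn_sub_div_mul_Haz hβ hτ hσα hc le_rfl zero_le_one
  · have h := (strictMonoOn_sub_div_mul_Haz hβ hτ hσα hc zero_le_one le_rfl).neg
    convert h using 2 with α
    rw [← neg_mul, ← neg_div, neg_sub]

theorem stmt7 (β σZ τQ : ℝ) (hβ : β ∈ Set.Ioo (0 : ℝ) 1) (hσZ : 0 ≤ σZ) (hτ : 0 < τQ)
    (σα c : ℝ → ℝ)
    (hσα : ∀ α, σα α = Real.sqrt (α ^ 2 + (1 - α) ^ 2 + σZ ^ 2))
    (hc : ∀ α, c α = α * β + (1 - α) * (1 - β)) :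
    StrictMonoOn (fun α => α / σα α * Haz (τQ * σα α / c α)) (Set.Ioo 0 1) ∧
    StrictAntiOn (fun α => (1 - α) / σα α * Haz (τQ * σα α / c α)) (Set.Ioo 0 1) :=
  stmt7_general β σZ τQ hβ hτ σα c hσα hc
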